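/- arXiv:2009.05922 — 2 statements merged into one kernel-verified Lean document; each statement's English description precedes it below -/
import Mathlib

section
/- Let G be a group and let A be a finite subset of G not containing the identity e. If the Cayley graph Cay(G,A) has exactly k components, where k is a positive integer, then G is generated by some set of exactly |A| + k − 1 elements; consequently, the rank of G (the minimum cardinality of a generating set of G) is at most |A| + k − 1. -/
/-!
Reachability in `Cay(G, A)` is exactly the relation `u⁻¹ * v ∈ ⟨A⟩`, so the components of the
Cayley graph are the left cosets of `H = ⟨A⟩` and `H` has index `k`. Then `A` together with one
representative of each of the `k - 1` cosets other than `H` generates `G`: every `g` is its coset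
representative times an element of `H`.
-/

open scoped Pointwise

/-- The Cayley graph of a group `G` with respect to a subset `A`: distinct vertices
`u` and `v` are adjacent iff `u = v * a` or `v = u * a` for some `a ∈ A` with `a ≠ 1`
(equivalently, `u⁻¹ * v ∈ A` or `v⁻¹ * u ∈ A`). -/
def cayleyGraph {G : Type*} [Group G] (A : Set G) : SimpleGraph G where
  Adj u v := u ≠ v ∧ (u⁻¹ * v ∈ A ∨ v⁻¹ * u ∈ A)
  symm := ⟨fun _ _ h => ⟨h.1.symm, h.2.symm⟩⟩
  loopless := ⟨fun _ h => h.1 rfl⟩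

namespace cayleyGraph

variable {G : Type*} [Group G] (A : Set G)

def mulLeft (g : G) : cayleyGraph A ≃g cayleyGraph A where
  toEquiv := Equiv.mulLeft g
  map_rel_iff' := by simp [cayleyGraph, mul_assoc]

theorem reachable_mul_left (g : G) {u v : G} (h : (cayleyGraph A).Reachable u v) :
    (cayleyGraph A).Reachable (g * u) (g * v) :=
  h.map (mulLeft A g).toHom

theorem inv_mul_mem_closure_of_adj {u v : G} (h : (cayleyGraph A).Adj u v) :
    u⁻¹ * v ∈ Subgroup.closure A := by
  rcases h.2 with h | h
  · exact Subgroup.subset_closure h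
  · simpa using (Subgroup.closure A).inv_mem (Subgroup.subset_closure h)

theorem reachable_one_of_mem_closure {g : G} (hg : g ∈ Subgroup.closure A) :
    (cayleyGraph A).Reachable 1 g := by
  induction hg using Subgroup.closure_induction with
  | mem a ha =>
    by_cases h1 : a = 1
    · rw [h1]
    · exact SimpleGraph.Adj.reachable ⟨Ne.symm h1, Or.inl (by simpa using ha)⟩
  | one => rfl
  | mul x y _ _ hx hy => exact hx.trans (by simpa using reachable_mul_left A x hy)
  | inv x _ hx => simpa using (reachable_mul_left A x⁻¹ hx).symm

theorem reachable_iff (u v : G) :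
    (cayleyGraph A).Reachable u v ↔ u⁻¹ * v ∈ Subgroup.closure A := by
  constructor
  · rintro ⟨w⟩
    induction w with
    | nil => simp
    | cons hadj _ ih => simpa [mul_assoc] using
        (Subgroup.closure A).mul_mem (inv_mul_mem_closure_of_adj A hadj) ih
  · intro h
    simpa using reachable_mul_left A u (reachable_one_of_mem_closure A h)

def connectedComponentEquiv :
    (cayleyGraph A).ConnectedComponent ≃ G ⧸ Subgroup.closure A :=
  Quot.congrRight fun u v => (reachable_iff A u v).trans QuotientGroup.leftRel_apply.symm

end cayleyGraph

namespace Subgroup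

variable {G : Type*} [Group G]

theorem eq_top_of_le_of_forall_out_mem {H K : Subgroup G} (hHK : H ≤ K)
    (hout : ∀ q : G ⧸ H, q ≠ ((1 : G) : G ⧸ H) → q.out ∈ K) : K = ⊤ := by
  refine eq_top_iff.mpr fun g _ => ?_
  by_cases hg : (g : G ⧸ H) = ((1 : G) : G ⧸ H)
  · exact hHK (by simpa using QuotientGroup.eq.mp hg.symm)
  · have hrep : (g : G ⧸ H).out⁻¹ * g ∈ H := QuotientGroup.eq.mp (QuotientGroup.out_eq' _)
    simpa using K.mul_mem (hout _ hg) (hHK hrep)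

theorem exists_finset_card_eq_closure_eq_top (H : Subgroup G) [H.FiniteIndex] (S : Finset G)
    (hS : closure (S : Set G) = H) :
    ∃ X : Finset G, X.card = S.card + H.index - 1 ∧ closure (X : Set G) = ⊤ := by
  classical
  have := Fintype.ofFinite (G ⧸ H)
  let R : Finset G := (Finset.univ.erase ((1 : G) : G ⧸ H)).image Quotient.out
  have hR : ∀ q : G ⧸ H, q ≠ ((1 : G) : G ⧸ H) → q.out ∈ R := fun q hq =>
    Finset.mem_image_of_mem _ (Finset.mem_erase.mpr ⟨hq, Finset.mem_univ q⟩)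
  have hRcard : R.card = H.index - 1 := by
    rw [Finset.card_image_of_injective _ Quotient.out_injective,
      Finset.card_erase_of_mem (Finset.mem_univ _), Finset.card_univ, index,
      Nat.card_eq_fintype_card]
    rfl
  have hdisj : Disjoint S R := by
    refine Finset.disjoint_left.mpr fun s hs hsR => ?_
    obtain ⟨q, hq, rfl⟩ := Finset.mem_image.mp hsR
    have hsH : q.out ∈ H := hS.le (subset_closure hs)
    refine (Finset.mem_erase.mp hq).1 ?_
    rw [← QuotientGroup.out_eq' q]
    exact QuotientGroup.eq.mpr (by simpa using H.inv_mem hsH)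
  refine ⟨S ∪ R, ?_, ?_⟩
  · have : 0 < H.index := Nat.pos_of_ne_zero FiniteIndex.index_ne_zero
    rw [Finset.card_union_of_disjoint hdisj, hRcard]
    omega
  · refine eq_top_of_le_of_forall_out_mem (H := H) ?_ fun q hq => subset_closure ?_
    · rw [← hS]
      exact closure_mono (by simp)
    · simpa using Or.inr (hR q hq)

end Subgroup

theorem stmt_17_general {G : Type*} [Group G] (A : Set G) (hA : A.Finite)
    (k : ℕ) (hk : 0 < k)
    (hcomp : Nat.card ((cayleyGraph A).ConnectedComponent) = k) :
    (∃ X : Finset G, X.card = A.ncard + k - 1 ∧ Subgroup.closure (X : Set G) = ⊤) ∧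
    sInf {n : ℕ | ∃ X : Finset G, X.card = n ∧ Subgroup.closure (X : Set G) = ⊤}
      ≤ A.ncard + k - 1 := by
  have hindex : (Subgroup.closure A).index = k := by
    rw [Subgroup.index, ← Nat.card_congr (cayleyGraph.connectedComponentEquiv A), hcomp]
  have : (Subgroup.closure A).FiniteIndex := ⟨by omega⟩
  obtain ⟨X, hXcard, hXtop⟩ :=
    (Subgroup.closure A).exists_finset_card_eq_closure_eq_top hA.toFinset (by simp)
  rw [hindex, ← Set.ncard_eq_toFinset_card A hA] at hXcard
  exact ⟨⟨X, hXcard, hXtop⟩, Nat.sInf_le ⟨X, hXcard, hXtop⟩⟩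

/-- If `A` is a finite subset of `G` not containing the identity and `Cay(G, A)` has
exactly `k` components (`k` positive), then `G` is generated by a set of exactly
`|A| + k - 1` elements; consequently the rank of `G`, the minimum cardinality of a
generating set, is at most `|A| + k - 1`. -/
theorem stmt_17 {G : Type*} [Group G] (A : Set G) (hA : A.Finite) (he : (1 : G) ∉ A)
    (k : ℕ) (hk : 0 < k)
    (hcomp : Nat.card ((cayleyGraph A).ConnectedComponent) = k) :
    (∃ X : Finset G, X.card = A.ncard + k - 1 ∧ Subgroup.closure (X : Set G) = ⊤) ∧
    sInf {n : ℕ | ∃ X : Finset G, X.card = n ∧ Subgroup.closure (X : Set G) = ⊤}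
      ≤ A.ncard + k - 1 :=
  stmt_17_general A hA k hk hcomp
end

section
/- Let G be a group and let a ∈ G with a ≠ e. If the Cayley graph Cay(G,{a}) has exactly k components, where k is a positive integer, then G is generated by some set of k elements, and hence the rank of G is at most k. -/
open scoped Pointwise

lemma cayley_reachable_iff {G : Type*} [Group G] (a : G) (ha : a ≠ 1) (u v : G) :
    (cayleyGraph {a}).Reachable u v ↔ u⁻¹ * v ∈ Subgroup.zpowers a := by
  constructor
  · rintro ⟨w⟩
    induction w with
    | nil => simpa using Subgroup.one_mem _
    | cons h p ih =>
      rename_i x y z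
      have hx : x⁻¹ * y ∈ Subgroup.zpowers a := by
        rcases h.2 with h1 | h1
        · simp at h1; exact h1 ▸ Subgroup.mem_zpowers a
        · simp at h1
          have : x⁻¹ * y = a⁻¹ := by rw [← h1]; group
          exact this ▸ Subgroup.inv_mem _ (Subgroup.mem_zpowers a)
      have := Subgroup.mul_mem _ hx ih
      simpa [mul_assoc] using this
  · rintro ⟨n, hn⟩
    simp only at hn
    have key : ∀ n : ℤ, (cayleyGraph {a}).Reachable u (u * a ^ n) := by
      intro n
      induction n using Int.induction_on with
      | zero => simpa using SimpleGraph.Reachable.refl u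
      | succ m ihm =>
        refine ihm.trans (SimpleGraph.Adj.reachable ?_)
        refine ⟨?_, Or.inl ?_⟩
        · intro h
          apply ha
          have h2 := mul_left_cancel h
          have h3 := congrArg (fun x => (a ^ (m:ℤ))⁻¹ * x) h2
          simp only [inv_mul_cancel] at h3
          rw [zpow_add_one] at h3
          simpa using h3.symm
        · show _ ∈ ({a} : Set G)
          rw [Set.mem_singleton_iff]
          rw [zpow_add_one]
          group
      | pred m ihm =>
        refine ihm.trans (SimpleGraph.Adj.reachable ?_)
        refine ⟨?_, Or.inr ?_⟩
        · intro h
          apply ha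
          have h2 := mul_left_cancel h
          have h3 := congrArg (fun x => a ^ (m:ℤ) * x) h2
          simp only [← zpow_add, add_neg_cancel] at h3
          have : (0 : ℤ) = m + (-m - 1) + 1 := by ring
          rw [show (m:ℤ) + (-m - 1) = -1 by ring] at h3
          simpa using h3.symm
        · show _ ∈ ({a} : Set G)
          rw [Set.mem_singleton_iff]
          rw [zpow_sub_one]
          group
    have hv : v = u * a ^ n := by rw [hn]; group
    exact hv ▸ key n
/-- If `a ∈ G` with `a ≠ 1` and `Cay(G, {a})` has exactly `k` components (`k`
positive), then `G` is generated by a set of `k` elements; hence the rank of `G`,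
the minimum cardinality of a generating set, is at most `k`. -/
theorem stmt_18 {G : Type*} [Group G] (a : G) (ha : a ≠ 1) (k : ℕ) (hk : 0 < k)
    (hcomp : Nat.card ((cayleyGraph {a}).ConnectedComponent) = k) :
    (∃ X : Finset G, X.card = k ∧ Subgroup.closure (X : Set G) = ⊤) ∧
    sInf {n : ℕ | ∃ X : Finset G, X.card = n ∧ Subgroup.closure (X : Set G) = ⊤}
      ≤ k := by
  classical
  set H := Subgroup.zpowers a with hH
  have hbij : Function.Bijective
      (SimpleGraph.ConnectedComponent.lift (fun g => (QuotientGroup.mk g : G ⧸ H))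
        (fun u v p _ => by
          refine (QuotientGroup.eq).2 ?_
          exact (cayley_reachable_iff a ha u v).1 p.reachable)) := by
    constructor
    · intro c d
      refine SimpleGraph.ConnectedComponent.ind₂ (fun u v h => ?_) c d
      simp only [SimpleGraph.ConnectedComponent.lift_mk] at h
      exact SimpleGraph.ConnectedComponent.sound
        ((cayley_reachable_iff a ha u v).2 (QuotientGroup.eq.1 h))
    · intro q
      refine QuotientGroup.induction_on q (fun g => ?_)
      exact ⟨(cayleyGraph {a}).connectedComponentMk g, rfl⟩
  have hcard : Nat.card (G ⧸ H) = k := by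
    rw [← hcomp]
    exact (Nat.card_eq_of_bijective _ hbij).symm
  have hfin : Finite (G ⧸ H) := (Nat.card_pos_iff.mp (hcard ▸ hk)).2
  have : Fintype (G ⧸ H) := Fintype.ofFinite _
  -- representative function
  let f : G ⧸ H → G := fun q => if q = ((1:G) : G ⧸ H) then a else q.out
  have hmkf : ∀ q : G ⧸ H, QuotientGroup.mk (f q) = q := by
    intro q
    by_cases hq : q = ((1:G) : G ⧸ H)
    · subst hq
      simp only [f, if_pos rfl]
      refine (QuotientGroup.eq).2 ?_
      show a⁻¹ * 1 ∈ H
      rw [mul_one, hH]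
      exact Subgroup.inv_mem _ (Subgroup.mem_zpowers a)
    · simp only [f, if_neg hq]
      exact Quotient.out_eq q
  have hinj : Function.Injective f := by
    intro q q' h
    rw [← hmkf q, ← hmkf q', h]
  let X : Finset G := Finset.image f Finset.univ
  have hXcard : X.card = k := by
    rw [Finset.card_image_of_injective _ hinj, Finset.card_univ,
      ← Nat.card_eq_fintype_card, hcard]
  have hamem : a ∈ X := by
    exact Finset.mem_image.2 ⟨((1:G) : G ⧸ H), Finset.mem_univ _, if_pos rfl⟩
  have hclos : Subgroup.closure (X : Set G) = ⊤ := by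
    rw [eq_top_iff]
    intro g _
    have haX : a ∈ Subgroup.closure (X : Set G) := Subgroup.subset_closure hamem
    have hHle : H ≤ Subgroup.closure (X : Set G) := by
      rw [hH]
      exact (Subgroup.zpowers_le).2 haX
    have hfg : f (QuotientGroup.mk g) ∈ Subgroup.closure (X : Set G) :=
      Subgroup.subset_closure (Finset.mem_image.2 ⟨_, Finset.mem_univ _, rfl⟩)
    have hrel : (f (QuotientGroup.mk g))⁻¹ * g ∈ H := by
      rw [← QuotientGroup.eq]
      exact hmkf _
    have : g = f (QuotientGroup.mk g) * ((f (QuotientGroup.mk g))⁻¹ * g) := by group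
    rw [this]
    exact Subgroup.mul_mem _ hfg (hHle hrel)
  refine ⟨⟨X, hXcard, hclos⟩, Nat.sInf_le ⟨X, hXcard, hclos⟩⟩
end
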